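/- arXiv:1309.4128 — 4 statements merged into one kernel-verified Lean document; each statement's English description precedes it below -/
import Mathlib

section
/- Suppose F₁, F₂ : [0,T) → ℝ are differentiable, satisfy F₁' + F₁F₂ = 0 and F₂' - F₁F₂ = 0, F₁(0) > 0 and F₂(0) < 0 with F₁(0) + F₂(0) ≠ 0. Let A = F₁(0) + F₂(0) and B = (ln F₁(0) - ln(-F₂(0)))/A. Then for t in the interval of existence, F₁(t) = A·exp(AB)/(exp(AB) - exp(At)), and F₁(t) + F₂(t) = A for all t. -/
open Set Real

/-!
The sum `F₁ + F₂` has derivative zero, so it equals `A`, and then `F₂ = A - F₁` turns the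
system into a logistic equation for `F₁`. With `c = exp (A B) = F₁ 0 / (-F₂ 0)`, the defect
`Q t = F₁ t (c - e^{A t}) - A c` of the closed form satisfies the linear equation `Q' = F₁ Q`
and `Q 0 = 0`; by Grönwall's inequality `Q` vanishes on `[0, T)`.
-/

theorem eqOn_zero_of_hasDerivAt_eq_smul {E : Type*} [NormedAddCommGroup E] [NormedSpace ℝ E]
    {a : ℝ → ℝ} {f : ℝ → E} {t₀ T : ℝ} (ha : ContinuousOn a (Ico t₀ T))
    (hf : ∀ t ∈ Ico t₀ T, HasDerivAt f (a t • f t) t) (hf₀ : f t₀ = 0) :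
    ∀ t ∈ Ico t₀ T, f t = 0 := by
  intro t ht
  have hsub : Icc t₀ t ⊆ Ico t₀ T := Icc_subset_Ico_right ht.2
  obtain ⟨K, hK⟩ := isCompact_Icc.exists_bound_of_continuousOn (ha.mono hsub)
  refine eq_zero_of_abs_deriv_le_mul_abs_self_of_eq_zero_right (K := K)
    (fun x hx => (hf x (hsub hx)).continuousAt.continuousWithinAt)
    (fun x hx => (hf x (hsub (Ico_subset_Icc_self hx))).hasDerivWithinAt) hf₀
    (fun x hx => ?_) t (right_mem_Icc.2 ht.1)
  rw [norm_smul]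
  exact mul_le_mul_of_nonneg_right (hK x (Ico_subset_Icc_self hx)) (norm_nonneg _)

section System

variable {T : ℝ} {F₁ F₂ : ℝ → ℝ}
  (h₁ : ∀ t ∈ Ico (0:ℝ) T, HasDerivAt F₁ (-(F₁ t * F₂ t)) t)
  (h₂ : ∀ t ∈ Ico (0:ℝ) T, HasDerivAt F₂ (F₁ t * F₂ t) t)

include h₁ h₂

theorem add_eq_add_zero : ∀ t ∈ Ico (0:ℝ) T, F₁ t + F₂ t = F₁ 0 + F₂ 0 := by
  have hS := eqOn_zero_of_hasDerivAt_eq_smul (a := 0)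
    (f := fun t => F₁ t + F₂ t - (F₁ 0 + F₂ 0)) continuousOn_const
    (fun t ht => by simpa using ((h₁ t ht).add (h₂ t ht)).sub_const (F₁ 0 + F₂ 0)) (by ring)
  exact fun t ht => sub_eq_zero.1 (hS t ht)

theorem mul_sub_exp_eq {c : ℝ} (hc : c * -F₂ 0 = F₁ 0) :
    ∀ t ∈ Ico (0:ℝ) T,
      F₁ t * (c - exp ((F₁ 0 + F₂ 0) * t)) = (F₁ 0 + F₂ 0) * c := by
  set A := F₁ 0 + F₂ 0
  have hQ := eqOn_zero_of_hasDerivAt_eq_smul (a := F₁)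
    (f := fun t => F₁ t * (c - exp (A * t)) - A * c)
    (fun t ht => (h₁ t ht).continuousAt.continuousWithinAt) ?_
    (by simp only [mul_zero, exp_zero]; linarith)
  · exact fun t ht => sub_eq_zero.1 (hQ t ht)
  intro t ht
  have hF₂ : F₂ t = A - F₁ t := eq_sub_of_add_eq' (add_eq_add_zero h₁ h₂ t ht)
  have hexp : HasDerivAt (fun t => exp (A * t)) (exp (A * t) * A) t := by
    simpa using ((hasDerivAt_id t).const_mul A).exp
  have hd : HasDerivAt (fun t => F₁ t * (c - exp (A * t)) - A * c)
      (-(F₁ t * F₂ t) * (c - exp (A * t)) + F₁ t * (0 - exp (A * t) * A)) t :=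
    ((h₁ t ht).mul ((hasDerivAt_const t c).sub hexp)).sub_const (A * c)
  refine hd.congr_deriv ?_
  rw [smul_eq_mul, hF₂]
  ring

end System

theorem stmt_2_general (T : ℝ) (F₁ F₂ : ℝ → ℝ)
    (h₁ : ∀ t ∈ Ico (0:ℝ) T, HasDerivAt F₁ (-(F₁ t * F₂ t)) t)
    (h₂ : ∀ t ∈ Ico (0:ℝ) T, HasDerivAt F₂ (F₁ t * F₂ t) t)
    (hF₁0 : 0 < F₁ 0) (hF₂0 : F₂ 0 < 0) (hA : F₁ 0 + F₂ 0 ≠ 0) :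
    ∀ t ∈ Ico (0:ℝ) T,
      (F₁ t = (F₁ 0 + F₂ 0) * exp ((F₁ 0 + F₂ 0) *
          ((log (F₁ 0) - log (-F₂ 0)) / (F₁ 0 + F₂ 0))) /
        (exp ((F₁ 0 + F₂ 0) * ((log (F₁ 0) - log (-F₂ 0)) / (F₁ 0 + F₂ 0))) -
          exp ((F₁ 0 + F₂ 0) * t))) ∧
      F₁ t + F₂ t = F₁ 0 + F₂ 0 := by
  set A := F₁ 0 + F₂ 0
  have hc : exp (A * ((log (F₁ 0) - log (-F₂ 0)) / A)) * -F₂ 0 = F₁ 0 := by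
    rw [mul_div_cancel₀ _ hA, exp_sub, exp_log hF₁0, exp_log (neg_pos.2 hF₂0),
      div_mul_cancel₀ _ (neg_pos.2 hF₂0).ne']
  intro t ht
  have hQ := mul_sub_exp_eq h₁ h₂ hc t ht
  have hden : exp (A * ((log (F₁ 0) - log (-F₂ 0)) / A)) - exp (A * t) ≠ 0 := by
    rintro h
    rw [h, mul_zero] at hQ
    exact mul_ne_zero hA (exp_pos _).ne' hQ.symm
  exact ⟨(eq_div_iff hden).2 hQ, add_eq_add_zero h₁ h₂ t ht⟩

/-- For the system `F₁' + F₁F₂ = 0`, `F₂' - F₁F₂ = 0` with `F₁ 0 > 0 > F₂ 0`,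
`A := F₁ 0 + F₂ 0 ≠ 0` and `B := (ln F₁(0) - ln(-F₂(0)))/A`, we have
`F₁ t = A e^{AB}/(e^{AB} - e^{At})` and `F₁ + F₂ ≡ A`. -/
theorem stmt_2 (T : ℝ) (hT : 0 < T) (F₁ F₂ : ℝ → ℝ)
    (h₁ : ∀ t ∈ Ico (0:ℝ) T, HasDerivAt F₁ (-(F₁ t * F₂ t)) t)
    (h₂ : ∀ t ∈ Ico (0:ℝ) T, HasDerivAt F₂ (F₁ t * F₂ t) t)
    (hF₁0 : 0 < F₁ 0) (hF₂0 : F₂ 0 < 0) (hA : F₁ 0 + F₂ 0 ≠ 0) :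
    ∀ t ∈ Ico (0:ℝ) T,
      (F₁ t = (F₁ 0 + F₂ 0) * exp ((F₁ 0 + F₂ 0) *
          ((log (F₁ 0) - log (-F₂ 0)) / (F₁ 0 + F₂ 0))) /
        (exp ((F₁ 0 + F₂ 0) * ((log (F₁ 0) - log (-F₂ 0)) / (F₁ 0 + F₂ 0))) -
          exp ((F₁ 0 + F₂ 0) * t))) ∧
      F₁ t + F₂ t = F₁ 0 + F₂ 0 :=
  stmt_2_general T F₁ F₂ h₁ h₂ hF₁0 hF₂0 hA
end

section
/- Fix h > 0 and k ∈ ℤ. The function u(x,t) = sin(πx(k - 1/2)/h) satisfies u(x+h,t) + u(x-h,t) = 0 for all x and t, and hence is a stationary global solution of u_t + (u(x+h,t) + u(x-h,t))u_x = 0. -/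
open Real

lemma key (h : ℝ) (hh : 0 < h) (k : ℤ) (x : ℝ) :
    Real.sin (π * (x + h) * ((k : ℝ) - 1/2) / h) +
      Real.sin (π * (x - h) * ((k : ℝ) - 1/2) / h) = 0 := by
  have h1 : π * (x + h) * ((k : ℝ) - 1/2) / h
      = π * x * ((k : ℝ) - 1/2) / h + π * ((k : ℝ) - 1/2) := by
    field_simp
  have h2 : π * (x - h) * ((k : ℝ) - 1/2) / h
      = π * x * ((k : ℝ) - 1/2) / h - π * ((k : ℝ) - 1/2) := by
    field_simp
  have hc : Real.cos (π * ((k : ℝ) - 1/2)) = 0 := by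
    have : π * ((k : ℝ) - 1/2) = -(π/2 - (k : ℝ) * π) := by ring
    rw [this, Real.cos_neg, Real.cos_pi_div_two_sub, Real.sin_int_mul_pi]
  rw [h1, h2, Real.sin_add, Real.sin_sub, hc]
  ring

/-- For `h > 0` and `k : ℤ`, `u(x,t) = sin(πx(k - 1/2)/h)` satisfies
`u(x+h,t) + u(x-h,t) = 0` for all `x, t`, hence is a stationary global solution of
the plus-sign nonlocal Burgers equation. -/
theorem stmt_5 (h : ℝ) (hh : 0 < h) (k : ℤ) :
    ∀ x t : ℝ,
      Real.sin (π * (x + h) * ((k : ℝ) - 1/2) / h) +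
        Real.sin (π * (x - h) * ((k : ℝ) - 1/2) / h) = 0 ∧
      HasDerivAt (fun s : ℝ => Real.sin (π * x * ((k : ℝ) - 1/2) / h)) 0 t ∧
      deriv (fun s : ℝ => Real.sin (π * x * ((k : ℝ) - 1/2) / h)) t +
        (Real.sin (π * (x + h) * ((k : ℝ) - 1/2) / h) +
          Real.sin (π * (x - h) * ((k : ℝ) - 1/2) / h)) *
          deriv (fun y : ℝ => Real.sin (π * y * ((k : ℝ) - 1/2) / h)) x = 0 := by
  intro x t
  refine ⟨key h hh k x, hasDerivAt_const _ _, ?_⟩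
  rw [key h hh k x, deriv_const]
  ring
end

section
/- Let u be a C² solution in x,t of u_t + (u(x+h,t) + u(x-h,t))u_x = 0, 2h-periodic in x, with u(0,t) = u(h,t) = 0 for all t. Then F₁(t) := u_x(0,t) and F₂(t) := u_x(h,t) satisfy the ODE system F₁' + 2F₁F₂ = 0, F₂' + 2F₁F₂ = 0. -/
/-!
Where `u` vanishes, the equation reduces to `u_t = 0`; differentiating it in `x` there gives
`u_xt(x₀) = -(u_x(x₀ + h) + u_x(x₀ - h)) · u_x(x₀)`, and symmetry of mixed partials turns
the left side into the time derivative of `u_x(x₀, ·)`. By `2h`-periodicity, `u` vanishes at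
`±h, 0, 2h` and `u_x(-h) = u_x(h)`, `u_x(2h) = u_x(0)`, so at `x₀ = 0` and `x₀ = h` the
factor `u_x(x₀ + h) + u_x(x₀ - h)` is `2F₂`, respectively `2F₁`.
-/

open Function

theorem Function.Periodic.deriv_eq {f : ℝ → ℝ} {c : ℝ} (hf : Periodic f c) (x : ℝ) :
    deriv f (x + c) = deriv f x := by
  rw [← deriv_comp_add_const, show (fun y => f (y + c)) = f from funext hf]

section Slices

variable {F : Type*} [NormedAddCommGroup F] [NormedSpace ℝ F]
  {f : ℝ × ℝ → F} {f' : ℝ × ℝ →L[ℝ] F} {x t : ℝ}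

theorem HasFDerivAt.hasDerivAt_slice_fst (hf : HasFDerivAt f f' (x, t)) :
    HasDerivAt (fun y => f (y, t)) (f' (1, 0)) x := by
  simpa [Function.comp_def] using
    hf.comp_hasDerivAt x ((hasDerivAt_id x).prodMk (hasDerivAt_const x t))

theorem HasFDerivAt.hasDerivAt_slice_snd (hf : HasFDerivAt f f' (x, t)) :
    HasDerivAt (fun s => f (x, s)) (f' (0, 1)) t := by
  simpa [Function.comp_def] using
    hf.comp_hasDerivAt t ((hasDerivAt_const t x).prodMk (hasDerivAt_id t))

end Slices

section MixedPartials

variable {u : ℝ → ℝ → ℝ}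

theorem deriv_slice_fst_eq_fderiv (hu : Differentiable ℝ (fun p : ℝ × ℝ => u p.1 p.2))
    (x t : ℝ) :
    deriv (fun y => u y t) x = fderiv ℝ (fun p : ℝ × ℝ => u p.1 p.2) (x, t) (1, 0) :=
  (hu (x, t)).hasFDerivAt.hasDerivAt_slice_fst.deriv

theorem deriv_slice_snd_eq_fderiv (hu : Differentiable ℝ (fun p : ℝ × ℝ => u p.1 p.2))
    (x t : ℝ) :
    deriv (fun s => u x s) t = fderiv ℝ (fun p : ℝ × ℝ => u p.1 p.2) (x, t) (0, 1) :=
  (hu (x, t)).hasFDerivAt.hasDerivAt_slice_snd.deriv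

theorem hasDerivAt_deriv_slice_fst_of_contDiff
    (hu : ContDiff ℝ 2 (fun p : ℝ × ℝ => u p.1 p.2)) (x t : ℝ) :
    HasDerivAt (fun s => deriv (fun y => u y s) x)
      (deriv (fun y => deriv (fun s => u y s) t) x) t := by
  set U : ℝ × ℝ → ℝ := fun p => u p.1 p.2
  have hU : Differentiable ℝ U := hu.differentiable two_ne_zero
  have hB : HasFDerivAt (fderiv ℝ U) (fderiv ℝ (fderiv ℝ U) (x, t)) (x, t) :=
    ((hu.fderiv_right le_rfl).differentiable one_ne_zero (x, t)).hasFDerivAt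
  have hsymm : fderiv ℝ (fderiv ℝ U) (x, t) (0, 1) (1, 0) =
      fderiv ℝ (fderiv ℝ U) (x, t) (1, 0) (0, 1) :=
    hu.contDiffAt.isSymmSndFDerivAt (by simp) _ _
  have hxt : HasDerivAt (fun y => deriv (fun s => u y s) t)
      (fderiv ℝ (fderiv ℝ U) (x, t) (1, 0) (0, 1)) x := by
    simp only [deriv_slice_snd_eq_fderiv hU]
    simpa using
      hB.hasDerivAt_slice_fst.clm_apply (hasDerivAt_const x ((0 : ℝ), (1 : ℝ)))
  simp only [deriv_slice_fst_eq_fderiv hU, hxt.deriv, ← hsymm]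
  simpa using hB.hasDerivAt_slice_snd.clm_apply (hasDerivAt_const t ((1 : ℝ), (0 : ℝ)))

end MixedPartials

theorem hasDerivAt_deriv_of_nonlocalBurgers {h : ℝ} {u : ℝ → ℝ → ℝ}
    (hu : ContDiff ℝ 2 (fun p : ℝ × ℝ => u p.1 p.2))
    (hpde : ∀ x t : ℝ, deriv (fun s => u x s) t +
      (u (x + h) t + u (x - h) t) * deriv (fun y => u y t) x = 0)
    {x₀ t E : ℝ} (hplus : u (x₀ + h) t = 0) (hminus : u (x₀ - h) t = 0)
    (hE_plus : deriv (fun y => u y t) (x₀ + h) = E)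
    (hE_minus : deriv (fun y => u y t) (x₀ - h) = E) :
    HasDerivAt (fun s => deriv (fun y => u y s) x₀)
      (-(2 * E * deriv (fun y => u y t) x₀)) t := by
  have hslice : ContDiff ℝ 2 (fun y => u y t) :=
    hu.comp (contDiff_id.prodMk contDiff_const)
  have hdiff : Differentiable ℝ (fun y => u y t) := hslice.differentiable two_ne_zero
  have hplus' : HasDerivAt (fun y => u (y + h) t) E x₀ :=
    hE_plus ▸ (hdiff (x₀ + h)).hasDerivAt.comp_add_const x₀ h
  have hminus' : HasDerivAt (fun y => u (y - h) t) E x₀ :=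
    hE_minus ▸ (hdiff (x₀ - h)).hasDerivAt.comp_sub_const x₀ h
  have hrhs : HasDerivAt (fun y => -((u (y + h) t + u (y - h) t) * deriv (fun z => u z t) y))
      (-(2 * E * deriv (fun y => u y t) x₀)) x₀ := by
    refine ((hplus'.add hminus').mul
      (hslice.differentiable_deriv_two x₀).hasDerivAt).neg.congr_deriv ?_
    simp only [Pi.add_apply, hplus, hminus]
    ring
  have hut : (fun y => deriv (fun s => u y s) t) =
      fun y => -((u (y + h) t + u (y - h) t) * deriv (fun z => u z t) y) :=
    funext fun y => eq_neg_of_add_eq_zero_left (hpde y t)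
  convert hasDerivAt_deriv_slice_fst_of_contDiff hu x₀ t using 1
  rw [hut, hrhs.deriv]

theorem stmt_9_general (h : ℝ) (u : ℝ → ℝ → ℝ)
    (hC2 : ContDiff ℝ 2 (fun p : ℝ × ℝ => u p.1 p.2))
    (hper : ∀ x t : ℝ, u (x + 2 * h) t = u x t)
    (hpde : ∀ x t : ℝ, deriv (fun s => u x s) t +
      (u (x + h) t + u (x - h) t) * deriv (fun y => u y t) x = 0)
    (hzero : ∀ t : ℝ, u 0 t = 0 ∧ u h t = 0) :
    ∀ t : ℝ,
      HasDerivAt (fun s => deriv (fun y => u y s) 0)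
        (-2 * deriv (fun y => u y t) 0 * deriv (fun y => u y t) h) t ∧
      HasDerivAt (fun s => deriv (fun y => u y s) h)
        (-2 * deriv (fun y => u y t) 0 * deriv (fun y => u y t) h) t := by
  intro t
  obtain ⟨hu0, huh⟩ := hzero t
  have hperiodic : Periodic (fun y => u y t) (2 * h) := fun y => hper y t
  have hu_neg_h : u (-h) t = 0 := by
    rw [← hper, neg_add_eq_sub, two_mul, add_sub_cancel_right, huh]
  have hu_two_h : u (h + h) t = 0 := by rw [← two_mul, ← zero_add (2 * h), hper, hu0]
  have hD_neg_h : deriv (fun y => u y t) (-h) = deriv (fun y => u y t) h := by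
    rw [← hperiodic.deriv_eq, neg_add_eq_sub, two_mul, add_sub_cancel_right]
  have hD_two_h : deriv (fun y => u y t) (h + h) = deriv (fun y => u y t) 0 := by
    rw [← two_mul, ← zero_add (2 * h), hperiodic.deriv_eq]
  constructor
  · convert hasDerivAt_deriv_of_nonlocalBurgers hC2 hpde (x₀ := 0) (by rwa [zero_add])
      (by rwa [zero_sub]) (by rw [zero_add]) (by rw [zero_sub, hD_neg_h]) using 1
    ring
  · convert hasDerivAt_deriv_of_nonlocalBurgers hC2 hpde (x₀ := h) hu_two_h
      (by rwa [sub_self]) hD_two_h (by rw [sub_self]) using 1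
    ring

/-- For a `C²`, `2h`-periodic (in `x`) solution of the plus-sign nonlocal Burgers
equation with `u(0,t) = u(h,t) = 0`, the functions `F₁(t) = u_x(0,t)` and
`F₂(t) = u_x(h,t)` satisfy `F₁' + 2F₁F₂ = 0` and `F₂' + 2F₁F₂ = 0`. -/
theorem stmt_9 (h : ℝ) (hh : 0 < h) (u : ℝ → ℝ → ℝ)
    (hC2 : ContDiff ℝ 2 (fun p : ℝ × ℝ => u p.1 p.2))
    (hper : ∀ x t : ℝ, u (x + 2 * h) t = u x t)
    (hpde : ∀ x t : ℝ, deriv (fun s => u x s) t +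
      (u (x + h) t + u (x - h) t) * deriv (fun y => u y t) x = 0)
    (hzero : ∀ t : ℝ, u 0 t = 0 ∧ u h t = 0) :
    ∀ t : ℝ,
      HasDerivAt (fun s => deriv (fun y => u y s) 0)
        (-2 * deriv (fun y => u y t) 0 * deriv (fun y => u y t) h) t ∧
      HasDerivAt (fun s => deriv (fun y => u y s) h)
        (-2 * deriv (fun y => u y t) 0 * deriv (fun y => u y t) h) t :=
  stmt_9_general h u hC2 hper hpde hzero
end

section
/- Let h > 0, k ∈ ℤ₊, L = kh, and let u be a C¹ solution of u_t + (u(x+h,t) - u(x-h,t))u_x = 0 that is L-periodic in x and satisfies u(mh,0) = 0 for all integers m. Then u(mh,t) = 0 for all t ≥ 0 and all integers m. -/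
/-!
At a lattice point `x = mh` the equation reads `∂ₜu(mh,t) = ∂ₓu(mh,t) (u((m-1)h,t) - u((m+1)h,t))`,
which involves `u` only at lattice points. Regarding `∂ₓu(mh,t)` as a known continuous
coefficient, and using periodicity to fold the lattice onto `ZMod k`, the lattice values form a
solution `w : ℝ → (ZMod k → ℝ)` of a linear ODE `ẇ = A(t) w` with `w 0 = 0`; uniqueness of ODE
solutions forces `w ≡ 0` for `t ≥ 0`.
-/

open Set Function

section LinearODE

variable {E : Type*} [NormedAddCommGroup E] [NormedSpace ℝ E]

theorem ODE_linear_solution_eq_zero {A : ℝ → E →L[ℝ] E} (hA : Continuous A)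
    {x : ℝ → E} (hx : ∀ t, HasDerivAt x (A t (x t)) t) (hx₀ : x 0 = 0) {T : ℝ} (hT : 0 ≤ T) :
    x T = 0 := by
  obtain ⟨K, hK⟩ := isCompact_Icc.exists_bound_of_continuousOn (hA.continuousOn (s := Icc 0 T))
  have hlip : ∀ t ∈ Ico 0 T, LipschitzOnWith K.toNNReal (A t) univ := fun t ht =>
    have hKt := Real.toNNReal_le_toNNReal (hK t (Ico_subset_Icc_self ht))
    ((A t).lipschitz.weaken (by simpa using hKt)).lipschitzOnWith
  have hx_cont : Continuous x := continuous_iff_continuousAt.2 fun t => (hx t).continuousAt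
  have hzero (t : ℝ) : HasDerivWithinAt (0 : ℝ → E) (A t 0) (Ici t) t := by
    rw [map_zero]
    exact hasDerivWithinAt_const t (Ici t) 0
  exact ODE_solution_unique_of_mem_Icc_right hlip hx_cont.continuousOn
    (fun t _ => (hx t).hasDerivWithinAt) (fun _ _ => mem_univ _) continuousOn_const
    (fun t _ => hzero t) (fun _ _ => mem_univ _) hx₀ ⟨hT, le_rfl⟩

end LinearODE

theorem ContDiff.continuous_uncurry_of_hasDerivAt_left {F : Type*} [NormedAddCommGroup F]
    [NormedSpace ℝ F] {f g : ℝ → ℝ → F} (hf : ContDiff ℝ 1 (uncurry f))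
    (hg : ∀ x t, HasDerivAt (fun y => f y t) (g x t) x) :
    Continuous (uncurry g) := by
  have hg_eq : uncurry g = fun p => fderiv ℝ (uncurry f) p (1, 0) := by
    funext ⟨x, t⟩
    have hline : HasDerivAt (fun y : ℝ => (y, t)) ((1 : ℝ), (0 : ℝ)) x :=
      (hasDerivAt_id x).prodMk (hasDerivAt_const x t)
    exact (hg x t).unique <| by
      exact (hf.differentiable one_ne_zero (x, t)).hasFDerivAt.comp_hasDerivAt x hline
  rw [hg_eq]
  exact (hf.continuous_fderiv one_ne_zero).clm_apply continuous_const

theorem Function.Periodic.apply_intCast_mul_eq_zmod_val {α : Type*} {f : ℝ → α} {n : ℕ}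
    [NeZero n] {h : ℝ} (hf : Periodic f (n * h)) (m : ℤ) :
    f (m * h) = f ((m : ZMod n).val * h) := by
  have hm : (m : ℝ) * h = ((m : ZMod n).val : ℤ) * h + (m / n : ℤ) * (n * h) := by
    rw [ZMod.val_intCast]
    conv_lhs => rw [← Int.emod_add_mul_ediv m n]
    push_cast
    ring
  rw [hm, hf.int_mul]
  push_cast
  rfl

section CyclicCentralDiff

variable {n : ℕ} [NeZero n]

noncomputable def cyclicCentralDiff (c : ZMod n → ℝ) : (ZMod n → ℝ) →L[ℝ] (ZMod n → ℝ) :=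
  LinearMap.toContinuousLinearMap
    { toFun := fun y i => c i * (y (i - 1) - y (i + 1))
      map_add' := fun y z => by ext i; simp only [Pi.add_apply]; ring
      map_smul' := fun a y => by ext i; simp only [Pi.smul_apply, smul_eq_mul, RingHom.id_apply]; ring }

@[simp]
theorem cyclicCentralDiff_apply (c y : ZMod n → ℝ) (i : ZMod n) :
    cyclicCentralDiff c y i = c i * (y (i - 1) - y (i + 1)) :=
  rfl

theorem continuous_cyclicCentralDiff {c : ℝ → ZMod n → ℝ} (hc : ∀ i, Continuous (c · i)) :
    Continuous fun t => cyclicCentralDiff (c t) :=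
  continuous_clm_apply.2 fun _ => continuous_pi fun i => (hc i).mul continuous_const

end CyclicCentralDiff

section LatticeValues

variable {u : ℝ → ℝ → ℝ} {h : ℝ} {n : ℕ} [NeZero n]

variable (u h n) in
def latticeValues (t : ℝ) (i : ZMod n) : ℝ :=
  u (i.val * h) t

theorem latticeValues_intCast (hper : ∀ t, Periodic (u · t) (n * h)) (t : ℝ) (m : ℤ) :
    latticeValues u h n t m = u (m * h) t :=
  ((hper t).apply_intCast_mul_eq_zmod_val m).symm

theorem latticeValues_add_intCast (hper : ∀ t, Periodic (u · t) (n * h)) (t : ℝ) (i : ZMod n)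
    (j : ℤ) : latticeValues u h n t (i + j) = u (i.val * h + j * h) t := by
  have hcast : (((i.val : ℤ) + j : ℤ) : ZMod n) = i + j := by
    simp only [Int.cast_add, Int.cast_natCast, ZMod.natCast_zmod_val]
  rw [← hcast, latticeValues_intCast hper]
  push_cast
  ring_nf

theorem hasDerivAt_latticeValues {ut ux : ℝ → ℝ → ℝ} (hper : ∀ t, Periodic (u · t) (n * h))
    (hut : ∀ x t, HasDerivAt (fun s => u x s) (ut x t) t)
    (hpde : ∀ x t, ut x t + (u (x + h) t - u (x - h) t) * ux x t = 0) (t : ℝ) :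
    HasDerivAt (latticeValues u h n)
      (cyclicCentralDiff (fun i => ux (i.val * h) t) (latticeValues u h n t)) t := by
  refine hasDerivAt_pi.2 fun i => (hut (i.val * h) t).congr_deriv ?_
  have hminus := latticeValues_add_intCast hper t i (-1)
  have hplus := latticeValues_add_intCast hper t i 1
  simp only [Int.cast_neg, Int.cast_one, neg_one_mul, one_mul, ← sub_eq_add_neg] at hminus hplus
  rw [cyclicCentralDiff_apply, hminus, hplus]
  linarith [hpde (i.val * h) t]

end LatticeValues

theorem stmt_18_general (h : ℝ) (k : ℤ) (hk : 0 < k)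
    (u ut ux : ℝ → ℝ → ℝ)
    (hC1 : ContDiff ℝ 1 (fun p : ℝ × ℝ => u p.1 p.2))
    (hut : ∀ x t : ℝ, HasDerivAt (fun s => u x s) (ut x t) t)
    (hux : ∀ x t : ℝ, HasDerivAt (fun y => u y t) (ux x t) x)
    (hper : ∀ x t : ℝ, u (x + k * h) t = u x t)
    (hpde : ∀ x t : ℝ, ut x t + (u (x + h) t - u (x - h) t) * ux x t = 0)
    (hinit : ∀ m : ℤ, u (m * h) 0 = 0) :
    ∀ m : ℤ, ∀ t : ℝ, 0 ≤ t → u (m * h) t = 0 := by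
  lift k to ℕ using hk.le
  have : NeZero k := ⟨by omega⟩
  have hperiodic : ∀ t, Periodic (u · t) (k * h) := fun t x => by simpa using hper x t
  have hcoeff : Continuous fun t => cyclicCentralDiff fun i : ZMod k => ux (i.val * h) t :=
    continuous_cyclicCentralDiff fun i =>
      (hC1.continuous_uncurry_of_hasDerivAt_left hux).comp (continuous_const.prodMk continuous_id)
  have hzero : latticeValues u h k 0 = 0 := funext fun i => by
    simpa only [latticeValues, Int.cast_natCast, Pi.zero_apply] using hinit i.val
  intro m t ht
  rw [← latticeValues_intCast hperiodic]
  exact congrFun (ODE_linear_solution_eq_zero hcoeff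
    (hasDerivAt_latticeValues hperiodic hut hpde) hzero ht) _

/-- For a `C¹`, `kh`-periodic (in `x`) solution of the minus-sign nonlocal Burgers
equation vanishing at all lattice points `mh` at time `0`, the solution vanishes at
all lattice points for all `t ≥ 0`. -/
theorem stmt_18 (h : ℝ) (hh : 0 < h) (k : ℤ) (hk : 0 < k)
    (u ut ux : ℝ → ℝ → ℝ)
    (hC1 : ContDiff ℝ 1 (fun p : ℝ × ℝ => u p.1 p.2))
    (hut : ∀ x t : ℝ, HasDerivAt (fun s => u x s) (ut x t) t)
    (hux : ∀ x t : ℝ, HasDerivAt (fun y => u y t) (ux x t) x)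
    (hper : ∀ x t : ℝ, u (x + k * h) t = u x t)
    (hpde : ∀ x t : ℝ, ut x t + (u (x + h) t - u (x - h) t) * ux x t = 0)
    (hinit : ∀ m : ℤ, u (m * h) 0 = 0) :
    ∀ m : ℤ, ∀ t : ℝ, 0 ≤ t → u (m * h) t = 0 :=
  stmt_18_general h k hk u ut ux hC1 hut hux hper hpde hinit
end
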